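/- arXiv:1604.05077 — 2 statements merged into one kernel-verified Lean document; each statement's English description precedes it below -/
import Mathlib

section
/- For all real x, y with x, y > 0 and all real p, q ≥ 0, the (p,q)-extended Beta function satisfies B(x,y;p,q) ≤ exp(-(√p + √q)²) · B(x,y), where B(x,y) is the classical Euler Beta function. -/
open Real MeasureTheory

/-!
By Sedrakyan's form of Cauchy–Schwarz with weights `t` and `1 - t` summing to one,
`p / t + q / (1 - t) ≥ (√p + √q) ^ 2` on `(0, 1)`, so the factor `exp (-p / t - q / (1 - t))`
of the integrand is at most `exp (-(√p + √q) ^ 2)`; integrate against the nonnegative Beta kernel.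
-/

/-- The (p,q)-extended Beta function. -/
noncomputable def pqBeta (x y p q : ℝ) : ℝ :=
  ∫ t in (0:ℝ)..1, t ^ (x - 1) * (1 - t) ^ (y - 1) * Real.exp (-p / t - q / (1 - t))

/-- The classical Euler Beta function as an integral. -/
noncomputable def eulerBeta (x y : ℝ) : ℝ :=
  ∫ t in (0:ℝ)..1, t ^ (x - 1) * (1 - t) ^ (y - 1)

open Set intervalIntegral

theorem add_sq_div_add_le_sq_div_add_sq_div (a b : ℝ) {s t : ℝ} (hs : 0 < s) (ht : 0 < t) :
    (a + b) ^ 2 / (s + t) ≤ a ^ 2 / s + b ^ 2 / t := by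
  simpa [Fin.sum_univ_two] using Finset.sq_sum_div_le_sum_sq_div Finset.univ ![a, b]
    (g := ![s, t]) (by simp [Fin.forall_fin_two, hs, ht])

theorem sqrt_add_sqrt_sq_le_div_add_div {p q t : ℝ} (hp : 0 ≤ p) (hq : 0 ≤ q)
    (ht₀ : 0 < t) (ht₁ : t < 1) :
    (√p + √q) ^ 2 ≤ p / t + q / (1 - t) := by
  simpa [sq_sqrt hp, sq_sqrt hq] using
    add_sq_div_add_le_sq_div_add_sq_div (√p) (√q) ht₀ (sub_pos.2 ht₁)

theorem exp_neg_div_sub_div_le {p q t : ℝ} (hp : 0 ≤ p) (hq : 0 ≤ q) (ht₀ : 0 < t) (ht₁ : t < 1) :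
    exp (-p / t - q / (1 - t)) ≤ exp (-(√p + √q) ^ 2) := by
  rw [exp_le_exp, neg_div]
  linarith [sqrt_add_sqrt_sq_le_div_add_div hp hq ht₀ ht₁]

theorem intervalIntegrable_rpow_mul_one_sub_rpow {x y : ℝ} (hx : 0 < x) (hy : 0 < y) :
    IntervalIntegrable (fun t : ℝ ↦ t ^ (x - 1) * (1 - t) ^ (y - 1)) volume 0 1 := by
  refine (Complex.betaIntegral_convergent (u := x) (v := y) (by simpa) (by simpa)).norm.congr_uIoo
    fun t ht ↦ ?_
  rw [uIoo_of_le zero_le_one] at ht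
  have h1t : (1 : ℂ) - t = ((1 - t : ℝ) : ℂ) := by push_cast; rfl
  simp only [norm_mul, h1t, Complex.norm_cpow_eq_rpow_re_of_pos ht.1,
    Complex.norm_cpow_eq_rpow_re_of_pos (sub_pos.2 ht.2)]
  simp

theorem pqBeta_le (x y p q : ℝ) (hx : 0 < x) (hy : 0 < y) (hp : 0 ≤ p) (hq : 0 ≤ q) :
    pqBeta x y p q ≤ Real.exp (-(Real.sqrt p + Real.sqrt q) ^ 2) * eulerBeta x y := by
  have hkernel := (intervalIntegrable_rpow_mul_one_sub_rpow hx hy).1.mono_set Ioo_subset_Ioc_self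
  simp only [pqBeta, eulerBeta, integral_of_le zero_le_one, integral_Ioc_eq_integral_Ioo,
    ← MeasureTheory.integral_const_mul]
  have hkernel_nonneg : ∀ t ∈ Ioo (0 : ℝ) 1, 0 ≤ t ^ (x - 1) * (1 - t) ^ (y - 1) := fun t ht ↦
    mul_nonneg (rpow_nonneg ht.1.le _) (rpow_nonneg (sub_nonneg.2 ht.2.le) _)
  refine integral_mono_of_nonneg
    (ae_restrict_of_forall_mem measurableSet_Ioo fun t ht ↦ ?_) (hkernel.const_mul _)
    (ae_restrict_of_forall_mem measurableSet_Ioo fun t ht ↦ ?_)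
  · exact mul_nonneg (hkernel_nonneg t ht) (exp_nonneg _)
  · dsimp only
    rw [mul_comm (exp _)]
    exact mul_le_mul_of_nonneg_left (exp_neg_div_sub_div_le hp hq ht.1 ht.2) (hkernel_nonneg t ht)
end

section
/- Laplace transform representation: For λ > 0, c > b > 0, p, q ≥ 0, z > 0, and real ω with |ω/z| < 1, one has F_{p,q}(λ, b; c; ω/z) = (z^λ / Γ(λ)) ∫₀^∞ exp(-z t) t^(λ-1) Φ_{p,q}(b; c; ω t) dt. -/
/-!
Expand `Φ_{p,q}(b; c; ωt)` in powers of `t` and integrate term by term: the Gamma integral gives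
`z^λ / Γ(λ) · ∫₀^∞ e^{-zt} t^{λ+n-1} dt = (λ)ₙ / zⁿ`, which turns the coefficients of `Φ_{p,q}`
into those of `F_{p,q}`. Since `0 ≤ B(b+n, c-b; p, q) ≤ B(b, c-b)`, the series of absolute values
is dominated by `∑ (λ)ₙ (|ω|/z)ⁿ / n! = (1 - |ω|/z)^{-λ}`, which justifies the interchange.
-/

open Real Set MeasureTheory

/-- The (p,q)-extended Gauss hypergeometric function, series definition. -/
noncomputable def pqGauss (a b c z p q : ℝ) : ℝ :=
  ∑' n : ℕ, (ascPochhammer ℝ n).eval a *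
    (pqBeta (b + n) (c - b) p q / pqBeta b (c - b) 0 0) * z ^ n / n.factorial

/-- The (p,q)-extended Kummer confluent hypergeometric function. -/
noncomputable def pqKummer (b c z p q : ℝ) : ℝ :=
  ∑' n : ℕ, (pqBeta (b + n) (c - b) p q / pqBeta b (c - b) 0 0) * z ^ n / n.factorial

open Nat

lemma intervalIntegrable_rpow_mul_one_sub_rpow_s12 {u v : ℝ} (hu : 0 < u) (hv : 0 < v) :
    IntervalIntegrable (fun t : ℝ => t ^ (u - 1) * (1 - t) ^ (v - 1)) volume 0 1 := by
  refine (Complex.betaIntegral_convergent (u := u) (v := v) (by simpa) (by simpa)).norm.congr_uIoo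
    fun t ht => ?_
  rw [uIoo_of_le zero_le_one] at ht
  have h1t : 0 < 1 - t := sub_pos.2 ht.2
  have h1t' : (1 : ℂ) - t = ((1 - t : ℝ) : ℂ) := by push_cast; ring
  dsimp only
  rw [norm_mul, h1t', Complex.norm_cpow_eq_rpow_re_of_pos ht.1,
    Complex.norm_cpow_eq_rpow_re_of_pos h1t]
  simp

lemma exp_neg_div_sub_div_le_one {p q t : ℝ} (hp : 0 ≤ p) (hq : 0 ≤ q) (ht : t ∈ Ioo (0:ℝ) 1) :
    Real.exp (-p / t - q / (1 - t)) ≤ 1 := by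
  have := div_nonneg hp ht.1.le
  have := div_nonneg hq (sub_pos.2 ht.2).le
  rw [Real.exp_le_one_iff, neg_div]
  linarith

lemma intervalIntegrable_pqBeta_integrand {x y p q : ℝ} (hx : 0 < x) (hy : 0 < y)
    (hp : 0 ≤ p) (hq : 0 ≤ q) :
    IntervalIntegrable
      (fun t => t ^ (x - 1) * (1 - t) ^ (y - 1) * Real.exp (-p / t - q / (1 - t))) volume 0 1 := by
  refine (intervalIntegrable_rpow_mul_one_sub_rpow_s12 hx hy).mono_fun (by fun_prop) ?_
  rw [uIoc_of_le zero_le_one, ← restrict_Ioo_eq_restrict_Ioc]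
  refine ae_restrict_of_forall_mem measurableSet_Ioo fun t ht => ?_
  have h1t : 0 < 1 - t := sub_pos.2 ht.2
  simp only [norm_mul, Real.norm_of_nonneg (Real.exp_pos _).le]
  exact mul_le_of_le_one_right (by positivity) (exp_neg_div_sub_div_le_one hp hq ht)

lemma pqBeta_nonneg (x y p q : ℝ) : 0 ≤ pqBeta x y p q :=
  intervalIntegral.integral_nonneg zero_le_one fun t ht => by
    have : 0 ≤ 1 - t := sub_nonneg.2 ht.2
    have := ht.1
    positivity

lemma pqBeta_le_pqBeta_zero_zero {x x' y p q : ℝ} (hx : 0 < x) (hxx' : x ≤ x') (hy : 0 < y)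
    (hp : 0 ≤ p) (hq : 0 ≤ q) : pqBeta x' y p q ≤ pqBeta x y 0 0 := by
  refine intervalIntegral.integral_mono_on_of_le_Ioo zero_le_one
    (intervalIntegrable_pqBeta_integrand (hx.trans_le hxx') hy hp hq)
    (intervalIntegrable_pqBeta_integrand hx hy le_rfl le_rfl) fun t ht => ?_
  have h1t : 0 < 1 - t := sub_pos.2 ht.2
  have hpow : t ^ (x' - 1) ≤ t ^ (x - 1) :=
    Real.rpow_le_rpow_of_exponent_ge ht.1 ht.2.le (by linarith)
  calc t ^ (x' - 1) * (1 - t) ^ (y - 1) * Real.exp (-p / t - q / (1 - t))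
      ≤ t ^ (x - 1) * (1 - t) ^ (y - 1) * 1 := by
        gcongr
        · exact mul_nonneg (Real.rpow_nonneg ht.1.le _) (Real.rpow_nonneg h1t.le _)
        · exact exp_neg_div_sub_div_le_one hp hq ht
    _ = t ^ (x - 1) * (1 - t) ^ (y - 1) * Real.exp (-0 / t - 0 / (1 - t)) := by simp

lemma pqBeta_div_pqBeta_zero_zero_mem_Icc {x x' y p q : ℝ} (hx : 0 < x) (hxx' : x ≤ x')
    (hy : 0 < y) (hp : 0 ≤ p) (hq : 0 ≤ q) :
    pqBeta x' y p q / pqBeta x y 0 0 ∈ Icc 0 1 :=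
  ⟨div_nonneg (pqBeta_nonneg _ _ _ _) (pqBeta_nonneg _ _ _ _),
    div_le_one_of_le₀ (pqBeta_le_pqBeta_zero_zero hx hxx' hy hp hq) (pqBeta_nonneg _ _ _ _)⟩

lemma summable_ascPochhammer_mul_pow_div_factorial {a r : ℝ} (ha : 0 < a) (hr : |r| < 1) :
    Summable fun n : ℕ => (ascPochhammer ℝ n).eval a * r ^ n / n ! := by
  have hrad : (ordinaryHypergeometricSeries ℝ a 1 1).radius = 1 :=
    ordinaryHypergeometricSeries_radius_eq_one ℝ a 1 1 fun k => by
      refine ⟨?_, ?_, ?_⟩ <;> · intro h; have := k.cast_nonneg (α := ℝ); linarith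
  have hsum := (ordinaryHypergeometricSeries ℝ a 1 1).summable_norm_apply (x := r)
    (by rw [hrad]; simpa [enorm_eq_nnnorm, ← NNReal.coe_lt_one] using hr)
  refine hsum.of_norm.congr fun n => ?_
  have h1 : (ascPochhammer ℝ n).eval (1:ℝ) ≠ 0 := (ascPochhammer_pos n 1 one_pos).ne'
  rw [ordinaryHypergeometricSeries_apply_eq, smul_eq_mul, mul_inv_cancel_right₀ h1]
  ring

lemma Real.Gamma_add_nat_eq_ascPochhammer_mul {s : ℝ} (hs : 0 < s) (n : ℕ) :
    Gamma (s + n) = (ascPochhammer ℝ n).eval s * Gamma s := by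
  induction n with
  | zero => simp
  | succ n ih =>
    rw [Nat.cast_succ, ← add_assoc, Real.Gamma_add_one (by positivity), ih,
      ascPochhammer_succ_right, Polynomial.eval_mul, Polynomial.eval_add, Polynomial.eval_X,
      Polynomial.eval_natCast]
    ring

lemma exp_neg_mul_mul_rpow_mul_pow_eq {s z t : ℝ} (ht : 0 < t) (n : ℕ) :
    exp (-z * t) * t ^ (s - 1) * t ^ n = t ^ (s + n - 1) * exp (-(z * t)) := by
  rw [add_sub_right_comm, Real.rpow_add ht, Real.rpow_natCast, neg_mul]
  ring

lemma integrableOn_exp_neg_mul_mul_rpow_mul_pow {s z : ℝ} (hs : 0 < s) (hz : 0 < z) (n : ℕ) :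
    IntegrableOn (fun t => exp (-z * t) * t ^ (s - 1) * t ^ n) (Ioi 0) := by
  refine IntegrableOn.congr_fun ?_ (fun t ht => (exp_neg_mul_mul_rpow_mul_pow_eq ht n).symm)
    measurableSet_Ioi
  simpa using integrableOn_rpow_mul_exp_neg_mul_rpow (s := s + n - 1) (p := 1)
    (by linarith [n.cast_nonneg (α := ℝ)]) one_pos hz

lemma integral_exp_neg_mul_mul_rpow_mul_pow {s z : ℝ} (hs : 0 < s) (hz : 0 < z) (n : ℕ) :
    ∫ t in Ioi 0, exp (-z * t) * t ^ (s - 1) * t ^ n =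
      Gamma s / z ^ s * ((ascPochhammer ℝ n).eval s / z ^ n) := by
  rw [setIntegral_congr_fun measurableSet_Ioi (fun t ht => exp_neg_mul_mul_rpow_mul_pow_eq ht n),
    integral_rpow_mul_exp_neg_mul_Ioi (by positivity) hz, Gamma_add_nat_eq_ascPochhammer_mul hs,
    one_div, inv_rpow hz.le, rpow_add hz, rpow_natCast]
  field_simp

lemma integral_exp_neg_mul_mul_rpow_mul_tsum {s z ω : ℝ} (hs : 0 < s) (hz : 0 < z) {a : ℕ → ℝ}
    (ha : Summable fun n => |a n| * (ascPochhammer ℝ n).eval s * (|ω| / z) ^ n) :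
    ∫ t in Ioi 0, exp (-z * t) * t ^ (s - 1) * ∑' n, a n * (ω * t) ^ n =
      Gamma s / z ^ s * ∑' n, a n * (ascPochhammer ℝ n).eval s * (ω / z) ^ n := by
  set F : ℕ → ℝ → ℝ := fun n t => a n * ω ^ n * (exp (-z * t) * t ^ (s - 1) * t ^ n)
  have hF (t : ℝ) : exp (-z * t) * t ^ (s - 1) * ∑' n, a n * (ω * t) ^ n = ∑' n, F n t := by
    rw [← tsum_mul_left]
    exact tsum_congr fun n => by ring
  have hF_int (n : ℕ) : Integrable (F n) (volume.restrict (Ioi 0)) :=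
    (integrableOn_exp_neg_mul_mul_rpow_mul_pow hs hz n).const_mul _
  have hF_norm (n : ℕ) : ∫ t in Ioi 0, ‖F n t‖ =
      Gamma s / z ^ s * (|a n| * (ascPochhammer ℝ n).eval s * (|ω| / z) ^ n) := by
    rw [setIntegral_congr_fun measurableSet_Ioi (g := fun t =>
        |a n * ω ^ n| * (exp (-z * t) * t ^ (s - 1) * t ^ n)) fun t (ht : 0 < t) => by
          rw [norm_mul, Real.norm_eq_abs, Real.norm_of_nonneg (by positivity)],
      integral_const_mul, integral_exp_neg_mul_mul_rpow_mul_pow hs hz, abs_mul, abs_pow, div_pow]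
    ring
  calc ∫ t in Ioi 0, exp (-z * t) * t ^ (s - 1) * ∑' n, a n * (ω * t) ^ n
      = ∫ t in Ioi 0, ∑' n, F n t := by simp_rw [hF]
    _ = ∑' n, ∫ t in Ioi 0, F n t :=
        (integral_tsum_of_summable_integral_norm hF_int
          (by simpa only [hF_norm] using ha.mul_left (Gamma s / z ^ s))).symm
    _ = ∑' n, Gamma s / z ^ s * (a n * (ascPochhammer ℝ n).eval s * (ω / z) ^ n) :=
        tsum_congr fun n => by
          rw [integral_const_mul, integral_exp_neg_mul_mul_rpow_mul_pow hs hz, div_pow]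
          ring
    _ = Gamma s / z ^ s * ∑' n, a n * (ascPochhammer ℝ n).eval s * (ω / z) ^ n := tsum_mul_left

theorem pqGauss_laplace (lam b c p q z ω : ℝ) (hlam : 0 < lam) (hb : 0 < b)
    (hcb : b < c) (hp : 0 ≤ p) (hq : 0 ≤ q) (hz : 0 < z) (hωz : |ω / z| < 1) :
    pqGauss lam b c (ω / z) p q =
      z ^ lam / Real.Gamma lam *
        ∫ t in Set.Ioi (0:ℝ),
          Real.exp (-z * t) * t ^ (lam - 1) * pqKummer b c (ω * t) p q := by
  set B : ℕ → ℝ := fun n => pqBeta (b + n) (c - b) p q / pqBeta b (c - b) 0 0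
  have hB (n : ℕ) : B n ∈ Icc 0 1 := pqBeta_div_pqBeta_zero_zero_mem_Icc hb
    (le_add_of_nonneg_right n.cast_nonneg) (sub_pos.2 hcb) hp hq
  have hr : |ω| / z < 1 := by rwa [abs_div, abs_of_pos hz] at hωz
  have hsum : Summable fun n => |B n / n !| * (ascPochhammer ℝ n).eval lam * (|ω| / z) ^ n := by
    refine (summable_ascPochhammer_mul_pow_div_factorial (r := |ω| / z) hlam
      (by rwa [abs_of_nonneg (by positivity)])).of_nonneg_of_le
      (fun n => by have := ascPochhammer_pos n lam hlam; positivity) fun n => ?_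
    have := ascPochhammer_pos n lam hlam
    rw [abs_of_nonneg (div_nonneg (hB n).1 (Nat.cast_nonneg _))]
    calc B n / n ! * (ascPochhammer ℝ n).eval lam * (|ω| / z) ^ n
        = B n * ((ascPochhammer ℝ n).eval lam * (|ω| / z) ^ n / n !) := by ring
      _ ≤ (ascPochhammer ℝ n).eval lam * (|ω| / z) ^ n / n ! :=
        mul_le_of_le_one_left (by positivity) (hB n).2
  have hKummer (t : ℝ) : pqKummer b c (ω * t) p q = ∑' n, B n / n ! * (ω * t) ^ n :=
    tsum_congr fun n => by ring
  simp_rw [hKummer]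
  rw [integral_exp_neg_mul_mul_rpow_mul_tsum hlam hz hsum, ← mul_assoc,
    div_mul_div_cancel₀ (Gamma_pos_of_pos hlam).ne', div_self (by positivity), one_mul]
  exact tsum_congr fun n => by ring
end
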